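/- For every w ∈ (0,1) such that T(w) < ∞, the deflection angle θ(w) is finite and T(w) < (π − θ(w))/w. -/

import Mathlib

open MeasureTheory Set
open scoped ENNReal

noncomputable section

/-- The integral `∫_{r₀}^∞ r^{-2} (1 - 2W(r) - w²r^{-2})^{-1/2} dr ∈ [0,∞]` appearing in
the definition of the deflection angle `θ(w) = π - 2w·(this integral)`. -/
def thetaInt (W : ℝ → ℝ) (rz w : ℝ) : ℝ≥0∞ :=
  ∫⁻ r in Set.Ioi rz, ENNReal.ofReal (1 / (r ^ 2 * Real.sqrt (1 - 2 * W r - w ^ 2 / r ^ 2)))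

/-- The deflection angle `θ(w) = π - 2w ∫_{r₀}^∞ r^{-2}(1-2W(r)-w²r^{-2})^{-1/2} dr`
(meaningful when the integral is finite). -/
def deflAngle (W : ℝ → ℝ) (rz w : ℝ) : ℝ :=
  Real.pi - 2 * w * (thetaInt W rz w).toReal

/-- The collision time `T(w) = 2 ∫_{r₀}^1 (1 - 2W(r) - w²r^{-2})^{-1/2} dr ∈ [0,∞]`. -/
def collTime (W : ℝ → ℝ) (rz w : ℝ) : ℝ≥0∞ :=
  2 * ∫⁻ r in Set.Ioo rz 1, ENNReal.ofReal (1 / Real.sqrt (1 - 2 * W r - w ^ 2 / r ^ 2))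

/-- `rz` is the largest zero in `(0,1)` of `r ↦ 1 - 2W(r) - w²r^{-2}`. -/
def IsLargestZero (W : ℝ → ℝ) (w rz : ℝ) : Prop :=
  rz ∈ Set.Ioo (0 : ℝ) 1 ∧ 1 - 2 * W rz - w ^ 2 / rz ^ 2 = 0 ∧
    ∀ r, rz < r → 1 - 2 * W r - w ^ 2 / r ^ 2 ≠ 0


/-!
Along the orbit the radial speed is `v(r) = √(1 - 2W(r) - w²/r²)`, so `T = 2∫_{r₀}^1 dr/v` while
`(π - θ)/w = 2∫_{r₀}^∞ dr/(r² v)`. On `(r₀, 1)` the weight `1/r²` exceeds `1` and is bounded by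
`1/r₀²`, so that part of the second integral dominates `T/2` and is finite. On `[1, ∞)` the
potential vanishes and the integrand is the explicit `1/(r² √(1 - w²/r²))`, which is positive and
`O(1/r²)`: this tail makes `θ` finite and the inequality strict.
-/

lemma one_div_le_one_div_sq_mul {r s : ℝ} (hr0 : 0 < r) (hr1 : r ≤ 1) (hs : 0 ≤ s) :
    1 / s ≤ 1 / (r ^ 2 * s) := by
  rw [one_div, one_div, mul_inv]
  exact le_mul_of_one_le_left (inv_nonneg.mpr hs)
    ((one_le_inv₀ (by positivity)).mpr (by nlinarith))

lemma one_div_sq_mul_le {a r s : ℝ} (ha : 0 < a) (har : a ≤ r) (hs : 0 ≤ s) :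
    1 / (r ^ 2 * s) ≤ 1 / a ^ 2 * (1 / s) := by
  rw [one_div_mul_one_div]
  rcases hs.eq_or_lt with rfl | hs
  · simp
  · exact one_div_le_one_div_of_le (by positivity) (by gcongr)

lemma integrableOn_Ioi_one_one_div_sq : IntegrableOn (fun r : ℝ => 1 / r ^ 2) (Ioi 1) := by
  refine (integrableOn_Ioi_rpow_of_lt (by norm_num : (-2 : ℝ) < -1) one_pos).congr_fun
    (fun r hr => ?_) measurableSet_Ioi
  show r ^ (-2 : ℝ) = 1 / r ^ 2
  rw [Real.rpow_neg (zero_le_one.trans hr.le), one_div, ← Real.rpow_natCast]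
  norm_num

lemma lintegral_Ioi_eq_Ioo_add_Ici {μ : Measure ℝ} {f : ℝ → ℝ≥0∞} {a b : ℝ} (hab : a < b) :
    ∫⁻ r in Ioi a, f r ∂μ = ∫⁻ r in Ioo a b, f r ∂μ + ∫⁻ r in Ici b, f r ∂μ := by
  rw [← Ioo_union_Ici_eq_Ioi hab, lintegral_union measurableSet_Ici
    (disjoint_left.mpr fun _ hx hx' => (not_le.mpr hx.2) hx')]

lemma setLIntegral_Ioo_one_div_le_one_div_sq_mul {g : ℝ → ℝ} {a : ℝ} (ha : 0 < a)
    (hg : ∀ r ∈ Ioo a 1, 0 ≤ g r) :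
    ∫⁻ r in Ioo a 1, ENNReal.ofReal (1 / g r) ≤
      ∫⁻ r in Ioo a 1, ENNReal.ofReal (1 / (r ^ 2 * g r)) :=
  setLIntegral_mono' measurableSet_Ioo fun r hr =>
    ENNReal.ofReal_le_ofReal (one_div_le_one_div_sq_mul (ha.trans hr.1) hr.2.le (hg r hr))

lemma setLIntegral_Ioo_one_div_sq_mul_le {g : ℝ → ℝ} {a b : ℝ} (ha : 0 < a)
    (hg : ∀ r ∈ Ioo a b, 0 ≤ g r) :
    ∫⁻ r in Ioo a b, ENNReal.ofReal (1 / (r ^ 2 * g r)) ≤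
      ENNReal.ofReal (1 / a ^ 2) * ∫⁻ r in Ioo a b, ENNReal.ofReal (1 / g r) := by
  rw [← lintegral_const_mul' _ _ ENNReal.ofReal_ne_top]
  refine setLIntegral_mono' measurableSet_Ioo fun r hr => ?_
  rw [← ENNReal.ofReal_mul (by positivity)]
  exact ENNReal.ofReal_le_ofReal (one_div_sq_mul_le ha hr.1.le (hg r hr))

lemma setLIntegral_Ici_one_one_div_sq_mul_sqrt_ne_top {w : ℝ} (hw : w ^ 2 < 1) :
    ∫⁻ r in Ici 1, ENNReal.ofReal (1 / (r ^ 2 * Real.sqrt (1 - w ^ 2 / r ^ 2))) ≠ ⊤ := by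
  have hc : 0 < Real.sqrt (1 - w ^ 2) := Real.sqrt_pos.mpr (by linarith)
  have hint : IntegrableOn (fun r : ℝ => 1 / Real.sqrt (1 - w ^ 2) * (1 / r ^ 2)) (Ici 1) :=
    (integrableOn_Ici_iff_integrableOn_Ioi).mpr (integrableOn_Ioi_one_one_div_sq.const_mul _)
  refine ne_top_of_le_ne_top hint.lintegral_lt_top.ne
    (setLIntegral_mono' measurableSet_Ici fun r (hr : 1 ≤ r) => ENNReal.ofReal_le_ofReal ?_)
  rw [one_div_mul_one_div, mul_comm (Real.sqrt _)]
  exact one_div_le_one_div_of_le (by positivity)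
    (by gcongr; exact div_le_self (sq_nonneg w) (one_le_pow₀ hr))

lemma setLIntegral_Ici_one_one_div_sq_mul_sqrt_pos {w : ℝ} (hw : w ^ 2 < 1) :
    0 < ∫⁻ r in Ici 1, ENNReal.ofReal (1 / (r ^ 2 * Real.sqrt (1 - w ^ 2 / r ^ 2))) := by
  rw [setLIntegral_pos_iff (by fun_prop)]
  refine lt_of_lt_of_le (by simp : 0 < volume (Ici (1 : ℝ)))
    (measure_mono fun r (hr : 1 ≤ r) => ⟨?_, hr⟩)
  have : 0 < 1 - w ^ 2 / r ^ 2 := by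
    linarith [div_le_self (sq_nonneg w) (one_le_pow₀ (n := 2) hr)]
  exact (ENNReal.ofReal_pos.mpr (by positivity)).ne'

lemma pi_sub_deflAngle_div {W : ℝ → ℝ} {rz w : ℝ} (hw : w ≠ 0) :
    (Real.pi - deflAngle W rz w) / w = 2 * (thetaInt W rz w).toReal := by
  rw [deflAngle]
  field_simp
  ring

theorem collision_time_lt_deflection_bound_general
    (W : ℝ → ℝ) (hW1 : ∀ r, 1 ≤ r → W r = 0)
    (r₀ : ℝ → ℝ) (hr₀ : ∀ w ∈ Set.Ioo (0 : ℝ) 1, IsLargestZero W w (r₀ w))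
    (w : ℝ) (hw : w ∈ Set.Ioo (0 : ℝ) 1)
    (hT : collTime W (r₀ w) w ≠ ⊤) :
    thetaInt W (r₀ w) w ≠ ⊤ ∧
      (collTime W (r₀ w) w).toReal < (Real.pi - deflAngle W (r₀ w) w) / w := by
  obtain ⟨⟨hrz0, hrz1⟩, -, -⟩ := hr₀ w hw
  have hw2 : w ^ 2 < 1 := by nlinarith [hw.1, hw.2]
  set v : ℝ → ℝ := fun r => Real.sqrt (1 - 2 * W r - w ^ 2 / r ^ 2)
  set T₀ := ∫⁻ r in Ioo (r₀ w) 1, ENNReal.ofReal (1 / v r)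
  set A := ∫⁻ r in Ioo (r₀ w) 1, ENNReal.ofReal (1 / (r ^ 2 * v r))
  set B := ∫⁻ r in Ici 1, ENNReal.ofReal (1 / (r ^ 2 * v r))
  have hθ : thetaInt W (r₀ w) w = A + B := lintegral_Ioi_eq_Ioo_add_Ici hrz1
  have hB : B = ∫⁻ r in Ici 1, ENNReal.ofReal (1 / (r ^ 2 * Real.sqrt (1 - w ^ 2 / r ^ 2))) :=
    setLIntegral_congr_fun measurableSet_Ici fun r hr => by simp [v, hW1 r hr]
  have hcoll : collTime W (r₀ w) w = 2 * T₀ := rfl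
  have hT₀ : T₀ ≠ ⊤ := fun h => hT (by rw [hcoll, h, ENNReal.mul_top two_ne_zero])
  have hA : A ≠ ⊤ := ne_top_of_le_ne_top (ENNReal.mul_ne_top ENNReal.ofReal_ne_top hT₀)
    (setLIntegral_Ioo_one_div_sq_mul_le hrz0 fun r _ => Real.sqrt_nonneg _)
  have hAB : A + B ≠ ⊤ :=
    ENNReal.add_ne_top.mpr ⟨hA, hB ▸ setLIntegral_Ici_one_one_div_sq_mul_sqrt_ne_top hw2⟩
  have hlt : T₀ < A + B := calc
    T₀ < T₀ + B :=
      ENNReal.lt_add_right hT₀ (hB ▸ (setLIntegral_Ici_one_one_div_sq_mul_sqrt_pos hw2).ne')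
    _ ≤ A + B := by
      gcongr
      exact setLIntegral_Ioo_one_div_le_one_div_sq_mul hrz0 fun r _ => Real.sqrt_nonneg _
  refine ⟨hθ ▸ hAB, ?_⟩
  rw [pi_sub_deflAngle_div hw.1.ne', hcoll, ENNReal.toReal_mul, ENNReal.toReal_ofNat, hθ]
  exact mul_lt_mul_of_pos_left ((ENNReal.toReal_lt_toReal hT₀ hAB).mpr hlt) two_pos

/-- For every `w ∈ (0,1)` with finite collision time `T(w) < ∞`, the
deflection angle `θ(w)` is finite and `T(w) < (π - θ(w))/w`. -/
theorem collision_time_lt_deflection_bound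
    (W : ℝ → ℝ) (hWc : ContinuousOn W (Set.Ioi 0)) (hW1 : ∀ r, 1 ≤ r → W r = 0)
    (hWlim : ∀ ε > (0 : ℝ), ∃ δ > (0 : ℝ), ∀ r ∈ Set.Ioo (0 : ℝ) δ, -ε < r ^ 2 * W r)
    (r₀ : ℝ → ℝ) (hr₀ : ∀ w ∈ Set.Ioo (0 : ℝ) 1, IsLargestZero W w (r₀ w))
    (w : ℝ) (hw : w ∈ Set.Ioo (0 : ℝ) 1)
    (hT : collTime W (r₀ w) w ≠ ⊤) :
    thetaInt W (r₀ w) w ≠ ⊤ ∧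
      (collTime W (r₀ w) w).toReal < (Real.pi - deflAngle W (r₀ w) w) / w :=
  collision_time_lt_deflection_bound_general W hW1 r₀ hr₀ w hw hT

end
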